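/- Let ψ(A)=dist²(A, SO(2)) for A a real 2×2 matrix, where SO(2) is the set of 2×2 rotation matrices and dist is with respect to the Frobenius norm. If the quasiconvex envelope ψ^{qc} of ψ satisfies ψ^{qc}(A)=0, then A∈SO(2). -/

import Mathlib

noncomputable section
open Real MeasureTheory Matrix

def SO2 : Set (Matrix (Fin 2) (Fin 2) ℝ) := {R | R * Rᵀ = 1 ∧ R.det = 1}

/-- Frobenius norm of a 2×2 real matrix. -/
def fnorm (A : Matrix (Fin 2) (Fin 2) ℝ) : ℝ :=
  Real.sqrt (∑ i : Fin 2, ∑ j : Fin 2, (A i j) ^ 2)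

/-- Frobenius distance to SO(2). -/
def dSO (A : Matrix (Fin 2) (Fin 2) ℝ) : ℝ := sInf {d : ℝ | ∃ R ∈ SO2, d = fnorm (A - R)}

/-- ψ(A) = dist²(A, SO(2)). -/
def psi (A : Matrix (Fin 2) (Fin 2) ℝ) : ℝ := (dSO A) ^ 2

/-- The gradient of a map ℝ² → ℝ² as a 2×2 matrix. -/
def gradMat (φ : (Fin 2 → ℝ) → (Fin 2 → ℝ)) (x : Fin 2 → ℝ) : Matrix (Fin 2) (Fin 2) ℝ :=
  LinearMap.toMatrix' ((fderiv ℝ φ x : (Fin 2 → ℝ) →L[ℝ] (Fin 2 → ℝ)) :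
    (Fin 2 → ℝ) →ₗ[ℝ] (Fin 2 → ℝ))

/-- The quasiconvex envelope of ψ at A, computed as the infimum of averages of
ψ(A + ∇φ) over Lipschitz maps φ vanishing outside Ω (`W^{1,∞}_0`). -/
def psiQC (Ω : Set (Fin 2 → ℝ)) (A : Matrix (Fin 2) (Fin 2) ℝ) : ℝ :=
  sInf {r : ℝ | ∃ φ : (Fin 2 → ℝ) → (Fin 2 → ℝ),
    (∃ K, LipschitzWith K φ) ∧ (∀ x ∉ Ω, φ x = 0) ∧
    r = ⨍ x in Ω, psi (A + gradMat φ x)}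

/-!
A function `N(F) = m + ⟪E, F⟫ + e det F` is a null Lagrangian: for `φ` Lipschitz and vanishing
outside `Ω`, the average of `N(A + ∇φ)` over `Ω` is `N(A)`, because both `∫ ∇φ` and `∫ det ∇φ`
vanish. For `det ∇φ = ω(∂₁φ, ∂₂φ)` with `ω` the area form this follows by dominated convergence
from central difference quotients: after expanding, translation invariance of Lebesgue measure and
antisymmetry of `ω` make every approximating integral vanish. Hence each such `N ≤ ψ` also bounds
`ψ^qc` from below.

Writing `r(B) = max_{R ∈ SO(2)} ⟪R, B⟫`, one has `ψ(B) = |B|² + 2 - 2 r(B)` and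
`r(B)² = |B|² + 2 det B`, so `ψ(B) = r² - 2r + 2 - 2 det B`. The tangent lines of `r ↦ r² - 2r`
at `s ≥ 1` give the null Lagrangian minorants `2 - s² + 2 (s - 1) ⟪R, B⟫ - 2 det B`. If
`ψ^qc(A) = 0` and `R` realises `r(A)`, the choice `s = 1` forces `r(A) ≥ 1`, and then `s = r(A)`
yields `|A - R|² ≤ 0`.
-/

open Filter Metric Set Topology MeasureTheory

section CentralDifference

variable {E F : Type*} [NormedAddCommGroup E] [NormedSpace ℝ E]
  [NormedAddCommGroup F] [NormedSpace ℝ F]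

def centralDiff (φ : E → F) (v : E) (t : ℝ) (x : E) : F :=
  (2 * t)⁻¹ • (φ (x + t • v) - φ (x - t • v))

lemma tendsto_centralDiff {φ : E → F} {x : E} (hφ : DifferentiableAt ℝ φ x) (v : E) :
    Tendsto (fun t => centralDiff φ v t x) (𝓝[≠] 0) (𝓝 (fderiv ℝ φ x v)) := by
  set g : ℝ → F := fun t => φ (x + t • v)
  have hg : HasDerivAt g (fderiv ℝ φ x v) 0 := by
    have hline : HasDerivAt (fun t : ℝ => x + t • v) v 0 :=
      ((hasDerivAt_id 0).smul_const v).const_add x |>.congr_deriv (one_smul ℝ v)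
    have hφ' : HasFDerivAt φ (fderiv ℝ φ x) (x + (0 : ℝ) • v) := by simpa using hφ.hasFDerivAt
    simpa [g, Function.comp_def] using hφ'.comp_hasDerivAt 0 hline
  have hslope := hasDerivAt_iff_tendsto_slope.1 hg
  have hneg : Tendsto (fun t : ℝ => -t) (𝓝[≠] 0) (𝓝[≠] 0) :=
    tendsto_nhdsWithin_of_tendsto_nhds_of_eventually_within _
      ((continuous_neg.tendsto' 0 0 neg_zero).mono_left nhdsWithin_le_nhds)
      (eventually_nhdsWithin_of_forall fun t ht => neg_ne_zero.2 ht)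
  -- the central quotient is the mean of the slopes at `t` and `-t`
  have := (hslope.add (hslope.comp hneg)).const_smul (2 : ℝ)⁻¹
  rw [← two_smul ℝ (fderiv ℝ φ x v), smul_smul, inv_mul_cancel₀ two_ne_zero, one_smul] at this
  refine this.congr' (eventually_nhdsWithin_of_forall fun t (ht : t ≠ 0) => ?_)
  simp only [Function.comp_apply, slope_def_module, centralDiff, g, zero_smul, add_zero,
    neg_smul, sub_eq_add_neg]
  module

lemma norm_centralDiff_le {φ : E → F} {K : NNReal} (hφ : LipschitzWith K φ) (v : E) {t : ℝ}
    (ht : t ≠ 0) (x : E) : ‖centralDiff φ v t x‖ ≤ K * ‖v‖ := by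
  have hdist := hφ.dist_le_mul (x + t • v) (x - t • v)
  rw [dist_eq_norm, dist_eq_norm, show x + t • v - (x - t • v) = (2 * t) • v by module,
    norm_smul] at hdist
  rw [centralDiff, norm_smul, norm_inv]
  calc ‖2 * t‖⁻¹ * ‖φ (x + t • v) - φ (x - t • v)‖ ≤ ‖2 * t‖⁻¹ * (K * (‖2 * t‖ * ‖v‖)) := by
        gcongr
    _ = K * ‖v‖ := by field_simp [norm_ne_zero_iff.2 (mul_ne_zero two_ne_zero ht)]

lemma centralDiff_eq_zero_of_notMem_cthickening {φ : E → F} (v : E) {t : ℝ} (ht : |t| ≤ 1)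
    {x : E} (hx : x ∉ cthickening ‖v‖ (tsupport φ)) : centralDiff φ v t x = 0 := by
  have hzero : ∀ y, ‖y - x‖ ≤ ‖v‖ → φ y = 0 := fun y hy =>
    image_eq_zero_of_notMem_tsupport fun hy' =>
      hx (mem_cthickening_of_dist_le x y _ _ hy' (by rwa [dist_comm, dist_eq_norm]))
  have hsmall : ‖t • v‖ ≤ ‖v‖ := by
    rw [norm_smul, Real.norm_eq_abs]; exact mul_le_of_le_one_left (norm_nonneg v) ht
  rw [centralDiff, hzero _ (by simpa using hsmall), hzero _ (by simpa using hsmall), sub_zero,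
    smul_zero]

end CentralDifference

lemma integrable_comp_add_right {E F : Type*} [NormedAddCommGroup E] [MeasurableSpace E]
    [BorelSpace E] (μ : Measure E) [IsFiniteMeasureOnCompacts μ] [TopologicalSpace F] [Zero F]
    {φ : E → F} (hφ : Continuous φ) (hφc : HasCompactSupport φ)
    {G : F → F → ℝ} (hG : Continuous (Function.uncurry G)) (hG0 : ∀ b, G 0 b = 0) (a b : E) :
    Integrable (fun x => G (φ (x + a)) (φ (x + b))) μ := by
  refine (hG.comp ((hφ.comp (continuous_add_const a)).prodMk
    (hφ.comp (continuous_add_const b)))).integrable_of_hasCompactSupport ?_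
  refine (hφc.comp_homeomorph (Homeomorph.addRight a)).mono' fun x hx => subset_tsupport _ ?_
  intro h
  simp [Function.comp_apply, Homeomorph.coe_addRight] at h
  simp [h, hG0] at hx

section NullLagrangian

variable {E F : Type*} [NormedAddCommGroup E] [NormedSpace ℝ E] [FiniteDimensional ℝ E]
  [MeasurableSpace E] [BorelSpace E] (μ : Measure E) [μ.IsAddHaarMeasure]
  [NormedAddCommGroup F] [NormedSpace ℝ F] [FiniteDimensional ℝ F] {φ : E → F}

lemma tendsto_integral_centralDiff {K : NNReal} (hφ : LipschitzWith K φ)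
    (hφc : HasCompactSupport φ) {G : F → F → ℝ} (hG : Continuous (Function.uncurry G))
    (hG0 : G 0 0 = 0) (v w : E) :
    Tendsto (fun t => ∫ x, G (centralDiff φ v t x) (centralDiff φ w t x) ∂μ) (𝓝[≠] 0)
      (𝓝 (∫ x, G (fderiv ℝ φ x v) (fderiv ℝ φ x w) ∂μ)) := by
  set S := cthickening (max ‖v‖ ‖w‖) (tsupport φ)
  have hS : IsCompact S := hφc.cthickening
  obtain ⟨C, hC⟩ := ((isCompact_closedBall (0 : F) (K * ‖v‖)).prod
    (isCompact_closedBall (0 : F) (K * ‖w‖))).exists_bound_of_continuousOn hG.continuousOn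
  have hcont : ∀ u t, Continuous (centralDiff φ u t) := fun u t => by
    have := hφ.continuous; unfold centralDiff; fun_prop
  have hsmall : ∀ᶠ t in 𝓝[≠] (0 : ℝ), |t| ≤ 1 ∧ t ≠ 0 := by
    have h1 : ∀ᶠ t in 𝓝 (0 : ℝ), |t| ≤ 1 :=
      Filter.mem_of_superset (closedBall_mem_nhds (0 : ℝ) one_pos) fun t ht => by
        simpa [Real.dist_eq] using ht
    exact (eventually_nhdsWithin_of_eventually_nhds h1).and self_mem_nhdsWithin
  refine tendsto_integral_filter_of_dominated_convergence (S.indicator fun _ => C)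
    (Eventually.of_forall fun t =>
      (hG.comp ((hcont v t).prodMk (hcont w t))).aestronglyMeasurable) ?_
    ((integrableOn_const hS.measure_lt_top.ne).integrable_indicator hS.measurableSet) ?_
  · filter_upwards [hsmall] with t ⟨ht1, ht0⟩
    refine Eventually.of_forall fun x => ?_
    by_cases hx : x ∈ S
    · rw [indicator_of_mem hx]
      refine hC (centralDiff φ v t x, centralDiff φ w t x) ⟨?_, ?_⟩ <;>
        simpa using norm_centralDiff_le hφ _ ht0 x
    · have hxv : x ∉ cthickening ‖v‖ (tsupport φ) := fun h =>
        hx (cthickening_mono (le_max_left _ _) _ h)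
      have hxw : x ∉ cthickening ‖w‖ (tsupport φ) := fun h =>
        hx (cthickening_mono (le_max_right _ _) _ h)
      rw [indicator_of_notMem hx, centralDiff_eq_zero_of_notMem_cthickening v ht1 hxv,
        centralDiff_eq_zero_of_notMem_cthickening w ht1 hxw, hG0, norm_zero]
  · filter_upwards [hφ.ae_differentiableAt] with x hx
    exact (hG.tendsto _).comp ((tendsto_centralDiff hx v).prodMk_nhds (tendsto_centralDiff hx w))

lemma integral_fderiv_apply_eq_zero {K : NNReal} (hφ : LipschitzWith K φ)
    (hφc : HasCompactSupport φ) (ℓ : F →L[ℝ] ℝ) (v : E) :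
    ∫ x, ℓ (fderiv ℝ φ x v) ∂μ = 0 := by
  have hint : ∀ a, Integrable (fun x => ℓ (φ (x + a))) μ := fun a =>
    integrable_comp_add_right μ hφ.continuous hφc (G := fun p _ => ℓ p) (by fun_prop)
      (fun _ => map_zero ℓ) a a
  refine tendsto_nhds_unique (tendsto_integral_centralDiff μ hφ hφc (G := fun p _ => ℓ p)
    (by fun_prop) (map_zero ℓ) v v) (tendsto_const_nhds.congr fun t => ?_)
  simp only [centralDiff, map_smul, map_sub, smul_eq_mul, sub_eq_add_neg _ (t • v)]
  rw [integral_const_mul, integral_sub (hint _) (hint _),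
    integral_add_right_eq_self (fun y => ℓ (φ y)), integral_add_right_eq_self (fun y => ℓ (φ y)),
    sub_self, mul_zero]

lemma integral_antisymm_fderiv_eq_zero {K : NNReal} (hφ : LipschitzWith K φ)
    (hφc : HasCompactSupport φ) (ω : F →L[ℝ] F →L[ℝ] ℝ) (hω : ∀ a b, ω a b = -ω b a)
    (v w : E) : ∫ x, ω (fderiv ℝ φ x v) (fderiv ℝ φ x w) ∂μ = 0 := by
  set I : E → E → ℝ := fun a b => ∫ x, ω (φ (x + a)) (φ (x + b)) ∂μ
  have hint : ∀ a b, Integrable (fun x => ω (φ (x + a)) (φ (x + b))) μ :=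
    integrable_comp_add_right μ hφ.continuous hφc ω.continuous₂ (fun b => by simp)
  have htrans : ∀ a b c, I (c + a) (c + b) = I a b := fun a b c => by
    simpa [I, add_assoc] using
      integral_add_right_eq_self (μ := μ) (fun y => ω (φ (y + a)) (φ (y + b))) c
  have hanti : ∀ a b, I a b = -I b a := fun a b => by
    simp only [I]
    rw [← integral_neg]
    exact integral_congr_ae (Eventually.of_forall fun x => hω _ _)
  refine tendsto_nhds_unique (tendsto_integral_centralDiff μ hφ hφc ω.continuous₂ (by simp) v w)
    (tendsto_const_nhds.congr fun t => ?_)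
  set a := t • v
  set b := t • w
  have hexp : (fun x => ω (centralDiff φ v t x) (centralDiff φ w t x)) = fun x =>
      ((2 * t)⁻¹ * (2 * t)⁻¹) * (ω (φ (x + a)) (φ (x + b)) - ω (φ (x + a)) (φ (x + -b))
        - ω (φ (x + -a)) (φ (x + b)) + ω (φ (x + -a)) (φ (x + -b))) := by
    funext x
    simp only [centralDiff, map_smul, map_sub, _root_.smul_apply,
      _root_.sub_apply, smul_eq_mul, sub_eq_add_neg _ (t • _), a, b]
    ring
  have h1 : I a b = I (a - b) 0 := by rw [← htrans (a - b) 0 b]; congr 1 <;> abel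
  have h2 : I a (-b) = I (a + b) 0 := by rw [← htrans (a + b) 0 (-b)]; congr 1 <;> abel
  have h3 : I (-a) b = -I (a + b) 0 := by
    rw [hanti, ← htrans (a + b) 0 (-a)]; congr 2 <;> abel
  have h4 : I (-a) (-b) = -I (a - b) 0 := by
    rw [hanti, ← htrans (a - b) 0 (-a)]; congr 2 <;> abel
  rw [hexp, integral_const_mul, integral_add, integral_sub, integral_sub]
  · change 0 = _ * (I a b - I a (-b) - I (-a) b + I (-a) (-b))
    rw [h1, h2, h3, h4]
    ring
  all_goals first
    | exact hint _ _
    | exact (hint _ _).sub (hint _ _)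
    | exact ((hint _ _).sub (hint _ _)).sub (hint _ _)

end NullLagrangian

section Frobenius

variable {m n : Type*} [Fintype m] [Fintype n]

def frobInner (A B : Matrix m n ℝ) : ℝ :=
  ∑ i, ∑ j, A i j * B i j

lemma frobInner_add_left (A B E : Matrix m n ℝ) :
    frobInner (A + B) E = frobInner A E + frobInner B E := by
  simp only [frobInner, Matrix.add_apply, add_mul, Finset.sum_add_distrib]

lemma frobInner_add_right (E A B : Matrix m n ℝ) :
    frobInner E (A + B) = frobInner E A + frobInner E B := by
  simp only [frobInner, Matrix.add_apply, mul_add, Finset.sum_add_distrib]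

lemma frobInner_smul_left (c : ℝ) (A B : Matrix m n ℝ) :
    frobInner (c • A) B = c * frobInner A B := by
  simp only [frobInner, Matrix.smul_apply, smul_eq_mul, Finset.mul_sum, mul_assoc]

end Frobenius

section TwoByTwo

variable {R : Matrix (Fin 2) (Fin 2) ℝ}

lemma det_add_fin_two (A B : Matrix (Fin 2) (Fin 2) ℝ) :
    (A + B).det = A.det + frobInner (A.adjugate)ᵀ B + B.det := by
  simp only [Matrix.det_fin_two, Matrix.adjugate_fin_two, frobInner, Fin.sum_univ_two,
    Matrix.add_apply, Matrix.transpose_apply, Matrix.of_apply, Matrix.cons_val',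
    Matrix.cons_val_zero, Matrix.cons_val_one, Matrix.empty_val', Matrix.cons_val_fin_one]
  ring

lemma two_mul_det_le_frobInner_self (B : Matrix (Fin 2) (Fin 2) ℝ) :
    2 * B.det ≤ frobInner B B := by
  simp only [Matrix.det_fin_two, frobInner, Fin.sum_univ_two]
  nlinarith [sq_nonneg (B 0 0 - B 1 1), sq_nonneg (B 0 1 + B 1 0)]

lemma fnorm_eq_zero {A : Matrix (Fin 2) (Fin 2) ℝ} : fnorm A = 0 ↔ A = 0 := by
  constructor
  · intro h
    have hsq := Real.sqrt_eq_zero'.1 h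
    simp only [Fin.sum_univ_two] at hsq
    ext i j
    fin_cases i <;> fin_cases j <;> simp <;>
      nlinarith [sq_nonneg (A 0 0), sq_nonneg (A 0 1), sq_nonneg (A 1 0), sq_nonneg (A 1 1)]
  · rintro rfl
    simp [fnorm]

lemma mem_SO2_iff : R ∈ SO2 ↔ ∃ c s : ℝ, c ^ 2 + s ^ 2 = 1 ∧ R = !![c, -s; s, c] := by
  constructor
  · rintro ⟨horth, hdet⟩
    have h00 := congr_fun₂ horth 0 0
    have h01 := congr_fun₂ horth 0 1
    have h11 := congr_fun₂ horth 1 1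
    simp [Matrix.mul_apply, Fin.sum_univ_two] at h00 h01 h11
    rw [Matrix.det_fin_two] at hdet
    have h1 : R 1 1 = R 0 0 := by nlinarith [sq_nonneg (R 0 0 - R 1 1), sq_nonneg (R 0 1 + R 1 0)]
    have h2 : R 0 1 = -R 1 0 := by nlinarith [sq_nonneg (R 0 0 - R 1 1), sq_nonneg (R 0 1 + R 1 0)]
    refine ⟨R 0 0, R 1 0, by rw [h2] at h00; linarith, Matrix.eta_fin_two R |>.trans ?_⟩
    rw [h1, h2]
  · rintro ⟨c, s, hcs, rfl⟩
    refine ⟨?_, by rw [Matrix.det_fin_two_of]; linear_combination hcs⟩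
    ext i j
    fin_cases i <;> fin_cases j <;> simp [Matrix.mul_apply, Fin.sum_univ_two] <;> nlinarith

/-- The maximum of `frobInner R B` over `R ∈ SO2`. -/
def maxInnerSO2 (B : Matrix (Fin 2) (Fin 2) ℝ) : ℝ :=
  √((B 0 0 + B 1 1) ^ 2 + (B 1 0 - B 0 1) ^ 2)

lemma maxInnerSO2_nonneg (B : Matrix (Fin 2) (Fin 2) ℝ) : 0 ≤ maxInnerSO2 B := Real.sqrt_nonneg _

lemma maxInnerSO2_sq (B : Matrix (Fin 2) (Fin 2) ℝ) :
    maxInnerSO2 B ^ 2 = frobInner B B + 2 * B.det := by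
  rw [maxInnerSO2, Real.sq_sqrt (by positivity)]
  simp only [frobInner, Matrix.det_fin_two, Fin.sum_univ_two]
  ring

lemma frobInner_rotation (c s : ℝ) (B : Matrix (Fin 2) (Fin 2) ℝ) :
    frobInner !![c, -s; s, c] B = c * (B 0 0 + B 1 1) + s * (B 1 0 - B 0 1) := by
  simp [frobInner, Fin.sum_univ_two]
  ring

lemma frobInner_le_maxInnerSO2 (hR : R ∈ SO2) (B : Matrix (Fin 2) (Fin 2) ℝ) :
    frobInner R B ≤ maxInnerSO2 B := by
  obtain ⟨c, s, hcs, rfl⟩ := mem_SO2_iff.1 hR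
  rw [frobInner_rotation]
  apply Real.le_sqrt_of_sq_le
  nlinarith [sq_nonneg (c * (B 1 0 - B 0 1) - s * (B 0 0 + B 1 1))]

lemma exists_frobInner_eq_maxInnerSO2 (B : Matrix (Fin 2) (Fin 2) ℝ) :
    ∃ R ∈ SO2, frobInner R B = maxInnerSO2 B := by
  set r := maxInnerSO2 B
  have hr2 : r ^ 2 = (B 0 0 + B 1 1) ^ 2 + (B 1 0 - B 0 1) ^ 2 :=
    Real.sq_sqrt (by positivity)
  rcases (maxInnerSO2_nonneg B).eq_or_lt with hr0 | hr0
  · refine ⟨1, mem_SO2_iff.2 ⟨1, 0, by norm_num, by rw [Matrix.one_fin_two, neg_zero]⟩, ?_⟩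
    have hp : B 0 0 + B 1 1 = 0 := by nlinarith
    simp [frobInner, Fin.sum_univ_two]
    linarith
  · have hr : r ≠ 0 := hr0.ne'
    refine ⟨_, mem_SO2_iff.2 ⟨(B 0 0 + B 1 1) / r, (B 1 0 - B 0 1) / r, ?_, rfl⟩, ?_⟩
    · field_simp; linarith
    · rw [frobInner_rotation]; field_simp; linarith

lemma fnorm_sub_sq (hR : R ∈ SO2) (B : Matrix (Fin 2) (Fin 2) ℝ) :
    fnorm (B - R) ^ 2 = frobInner B B - 2 * frobInner R B + 2 := by
  obtain ⟨c, s, hcs, rfl⟩ := mem_SO2_iff.1 hR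
  rw [fnorm, Real.sq_sqrt (by positivity), frobInner_rotation]
  simp [frobInner, Fin.sum_univ_two]
  linear_combination 2 * hcs

lemma psi_eq (B : Matrix (Fin 2) (Fin 2) ℝ) :
    psi B = frobInner B B - 2 * maxInnerSO2 B + 2 := by
  obtain ⟨R₀, hR₀, hmax⟩ := exists_frobInner_eq_maxInnerSO2 B
  have hleast : IsLeast {d | ∃ R ∈ SO2, d = fnorm (B - R)} (fnorm (B - R₀)) := by
    refine ⟨⟨R₀, hR₀, rfl⟩, ?_⟩
    rintro _ ⟨R, hR, rfl⟩
    have hsq : fnorm (B - R₀) ^ 2 ≤ fnorm (B - R) ^ 2 := by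
      rw [fnorm_sub_sq hR₀, fnorm_sub_sq hR, hmax]
      linarith [frobInner_le_maxInnerSO2 hR B]
    exact (pow_le_pow_iff_left₀ (Real.sqrt_nonneg _) (Real.sqrt_nonneg _) two_ne_zero).1 hsq
  rw [psi, dSO, hleast.csInf_eq, fnorm_sub_sq hR₀, hmax]

lemma continuous_psi : Continuous psi := by
  have : psi = fun B => frobInner B B - 2 * maxInnerSO2 B + 2 := funext psi_eq
  rw [this]
  simp only [frobInner, maxInnerSO2, Fin.sum_univ_two]
  fun_prop

lemma nullLagrangian_le_psi (hR : R ∈ SO2) {s : ℝ} (hs : 1 ≤ s) (B : Matrix (Fin 2) (Fin 2) ℝ) :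
    2 - s ^ 2 + frobInner ((2 * (s - 1)) • R) B + -2 * B.det ≤ psi B := by
  rw [psi_eq, frobInner_smul_left]
  have h1 := frobInner_le_maxInnerSO2 hR B
  have h2 := maxInnerSO2_sq B
  nlinarith [sq_nonneg (maxInnerSO2 B - s),
    mul_le_mul_of_nonneg_left h1 (by linarith : 0 ≤ 2 * (s - 1))]

end TwoByTwo

lemma gradMat_apply (φ : (Fin 2 → ℝ) → Fin 2 → ℝ) (x : Fin 2 → ℝ) (i j : Fin 2) :
    gradMat φ x i j = fderiv ℝ φ x (Pi.single j 1) i := by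
  simp [gradMat, LinearMap.toMatrix'_apply]

def areaForm : (Fin 2 → ℝ) →L[ℝ] (Fin 2 → ℝ) →L[ℝ] ℝ :=
  let p : Fin 2 → (Fin 2 → ℝ) →L[ℝ] ℝ := ContinuousLinearMap.proj
  (p 0).smulRight (p 1) - (p 1).smulRight (p 0)

lemma areaForm_apply (u w : Fin 2 → ℝ) : areaForm u w = u 0 * w 1 - u 1 * w 0 := by
  simp [areaForm, mul_comm]

lemma det_gradMat (φ : (Fin 2 → ℝ) → Fin 2 → ℝ) (x : Fin 2 → ℝ) :
    (gradMat φ x).det =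
      areaForm (fderiv ℝ φ x (Pi.single 0 1)) (fderiv ℝ φ x (Pi.single 1 1)) := by
  rw [Matrix.det_fin_two, areaForm_apply]
  simp only [gradMat_apply]
  ring

lemma integrableOn_comp_gradMat {f : Matrix (Fin 2) (Fin 2) ℝ → ℝ} (hf : Continuous f)
    {φ : (Fin 2 → ℝ) → Fin 2 → ℝ} {K : NNReal} (hφ : LipschitzWith K φ) {Ω : Set (Fin 2 → ℝ)}
    (hΩ : volume Ω ≠ ⊤) :
    IntegrableOn (fun x => f (gradMat φ x)) Ω := by
  set M : ((Fin 2 → ℝ) →L[ℝ] Fin 2 → ℝ) → Matrix (Fin 2) (Fin 2) ℝ :=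
    fun L => LinearMap.toMatrix' (L : (Fin 2 → ℝ) →ₗ[ℝ] Fin 2 → ℝ)
  have hM : Continuous M := by
    refine continuous_pi fun i => continuous_pi fun j => ?_
    simp only [M, LinearMap.toMatrix'_apply, ContinuousLinearMap.coe_coe]
    fun_prop
  obtain ⟨C, hC⟩ := (isCompact_closedBall (0 : (Fin 2 → ℝ) →L[ℝ] Fin 2 → ℝ) K
    ).exists_bound_of_continuousOn (hf.comp hM).continuousOn
  refine Measure.integrableOn_of_bounded (M := C) hΩ
    ((hf.comp hM).measurable.comp (measurable_fderiv ℝ φ)).aestronglyMeasurable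
    (ae_of_all _ fun x => hC _ ?_)
  simpa using norm_fderiv_le_of_lipschitz ℝ hφ

lemma ae_fderiv_eq_zero_of_eqOn_zero {E : Type*} [NormedAddCommGroup E] [NormedSpace ℝ E]
    [FiniteDimensional ℝ E] [MeasurableSpace E] [BorelSpace E] (μ : Measure E)
    [μ.IsAddHaarMeasure] {f : E → E} {s : Set E} (hs : MeasurableSet s) (hf : EqOn f 0 s) :
    ∀ᵐ x ∂μ, x ∈ s → fderiv ℝ f x = 0 := by
  set d := {x | DifferentiableAt ℝ f x}
  have hsd : MeasurableSet (s ∩ d) := hs.inter (measurableSet_of_differentiableAt ℝ f)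
  have happrox : ApproximatesLinearOn f (0 : E →L[ℝ] E) (s ∩ d) 0 := fun x hx y hy => by
    simp [hf hx.1, hf hy.1]
  have := happrox.norm_fderiv_sub_le μ hsd (fderiv ℝ f) fun x hx =>
    hx.2.hasFDerivAt.hasFDerivWithinAt
  rw [ae_restrict_iff' hsd] at this
  filter_upwards [this] with x hx hxs
  by_cases hdx : DifferentiableAt ℝ f x
  · simpa using hx ⟨hxs, hdx⟩
  · exact fderiv_zero_of_not_differentiableAt hdx

section VanishingOutside

variable {Ω : Set (Fin 2 → ℝ)} {φ : (Fin 2 → ℝ) → Fin 2 → ℝ} {K : NNReal}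

lemma setIntegral_gradMat_apply (hΩ : MeasurableSet Ω) (hφ : LipschitzWith K φ)
    (hφc : HasCompactSupport φ) (hφΩ : ∀ x ∉ Ω, φ x = 0) (i j : Fin 2) :
    ∫ x in Ω, gradMat φ x i j = 0 := by
  rw [setIntegral_eq_integral_of_ae_compl_eq_zero]
  · simpa [gradMat_apply] using
      integral_fderiv_apply_eq_zero volume hφ hφc (ContinuousLinearMap.proj i) (Pi.single j 1)
  · filter_upwards [ae_fderiv_eq_zero_of_eqOn_zero volume hΩ.compl hφΩ] with x hx hxΩ
    simp [gradMat_apply, hx hxΩ]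

lemma setIntegral_det_gradMat (hΩ : MeasurableSet Ω) (hφ : LipschitzWith K φ)
    (hφc : HasCompactSupport φ) (hφΩ : ∀ x ∉ Ω, φ x = 0) :
    ∫ x in Ω, (gradMat φ x).det = 0 := by
  rw [setIntegral_eq_integral_of_ae_compl_eq_zero]
  · simpa [det_gradMat] using integral_antisymm_fderiv_eq_zero volume hφ hφc areaForm
      (fun u w => by simp only [areaForm_apply]; ring) (Pi.single 0 1) (Pi.single 1 1)
  · filter_upwards [ae_fderiv_eq_zero_of_eqOn_zero volume hΩ.compl hφΩ] with x hx hxΩ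
    simp [det_gradMat, hx hxΩ]

lemma setIntegral_frobInner_add_det_gradMat (hΩ : MeasurableSet Ω) (hΩ' : volume Ω ≠ ⊤)
    (hφ : LipschitzWith K φ) (hφc : HasCompactSupport φ) (hφΩ : ∀ x ∉ Ω, φ x = 0)
    (E : Matrix (Fin 2) (Fin 2) ℝ) (e : ℝ) :
    ∫ x in Ω, (frobInner E (gradMat φ x) + e * (gradMat φ x).det) = 0 := by
  have hentry : ∀ i j, IntegrableOn (fun x => E i j * gradMat φ x i j) Ω := fun i j =>
    integrableOn_comp_gradMat (f := fun G => E i j * G i j) (by fun_prop) hφ hΩ'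
  have hrow : ∀ i, IntegrableOn (fun x => ∑ j, E i j * gradMat φ x i j) Ω := fun i =>
    integrable_finsetSum _ fun j _ => hentry i j
  have hdet : IntegrableOn (fun x => e * (gradMat φ x).det) Ω :=
    integrableOn_comp_gradMat (f := fun G => e * G.det) (by fun_prop) hφ hΩ'
  simp only [frobInner]
  rw [integral_add (integrable_finsetSum _ fun i _ => hrow i) hdet,
    integral_finsetSum _ fun i _ => hrow i]
  simp only [integral_finsetSum _ fun j _ => hentry _ j, integral_const_mul,
    setIntegral_gradMat_apply hΩ hφ hφc hφΩ, setIntegral_det_gradMat hΩ hφ hφc hφΩ, mul_zero,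
    Finset.sum_const_zero, add_zero]

lemma setIntegral_nullLagrangian_gradMat (hΩ : MeasurableSet Ω) (hΩ' : volume Ω ≠ ⊤)
    (hφ : LipschitzWith K φ) (hφc : HasCompactSupport φ) (hφΩ : ∀ x ∉ Ω, φ x = 0)
    (m e : ℝ) (E A : Matrix (Fin 2) (Fin 2) ℝ) :
    ∫ x in Ω, (m + frobInner E (A + gradMat φ x) + e * (A + gradMat φ x).det) =
      volume.real Ω * (m + frobInner E A + e * A.det) := by
  set E' := E + e • (A.adjugate)ᵀ
  have hsplit : ∀ x, m + frobInner E (A + gradMat φ x) + e * (A + gradMat φ x).det =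
      (m + frobInner E A + e * A.det) + (frobInner E' (gradMat φ x) + e * (gradMat φ x).det) :=
    fun x => by
      rw [frobInner_add_right, det_add_fin_two, frobInner_add_left, frobInner_smul_left]
      ring
  have hrest : IntegrableOn (fun x => frobInner E' (gradMat φ x) + e * (gradMat φ x).det) Ω :=
    integrableOn_comp_gradMat (f := fun G => frobInner E' G + e * G.det)
      (by simp only [frobInner]; fun_prop) hφ hΩ'
  have : IsFiniteMeasure (volume.restrict Ω) := isFiniteMeasure_restrict.2 hΩ'
  simp_rw [hsplit]
  rw [integral_add (integrable_const _) hrest,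
    setIntegral_frobInner_add_det_gradMat hΩ hΩ' hφ hφc hφΩ, setIntegral_const, smul_eq_mul,
    add_zero]

end VanishingOutside

lemma le_psiQC {Ω : Set (Fin 2 → ℝ)} (hΩ : MeasurableSet Ω) (hΩb : Bornology.IsBounded Ω)
    (hΩ0 : volume Ω ≠ 0) {m e : ℝ} {E : Matrix (Fin 2) (Fin 2) ℝ}
    (h : ∀ B, m + frobInner E B + e * B.det ≤ psi B) (A : Matrix (Fin 2) (Fin 2) ℝ) :
    m + frobInner E A + e * A.det ≤ psiQC Ω A := by
  have hΩ' : volume Ω ≠ ⊤ := hΩb.measure_lt_top.ne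
  refine le_csInf ⟨_, fun _ => 0, ⟨0, LipschitzWith.const 0⟩, fun _ _ => rfl, rfl⟩ ?_
  rintro _ ⟨φ, ⟨K, hφ⟩, hφΩ, rfl⟩
  have hφc : HasCompactSupport φ := HasCompactSupport.of_support_subset_isCompact
    hΩb.isCompact_closure fun x hx => subset_closure (by_contra fun h => hx (hφΩ x h))
  have hvol : 0 < volume.real Ω := ENNReal.toReal_pos hΩ0 hΩ'
  rw [setAverage_eq, smul_eq_mul, le_inv_mul_iff₀ hvol,
    ← setIntegral_nullLagrangian_gradMat hΩ hΩ' hφ hφc hφΩ]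
  exact setIntegral_mono_on
    (integrableOn_comp_gradMat (f := fun G => m + frobInner E (A + G) + e * (A + G).det)
      (by simp only [frobInner]; fun_prop) hφ hΩ')
    (integrableOn_comp_gradMat (f := fun G => psi (A + G))
      (continuous_psi.comp (continuous_const.add continuous_id)) hφ hΩ')
    hΩ fun x _ => h _

theorem stmt_2 (Ω : Set (Fin 2 → ℝ)) (hΩo : IsOpen Ω) (hΩb : Bornology.IsBounded Ω)
    (hΩne : Ω.Nonempty) (A : Matrix (Fin 2) (Fin 2) ℝ)
    (h : psiQC Ω A = 0) : A ∈ SO2 := by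
  obtain ⟨R, hR, hRA⟩ := exists_frobInner_eq_maxInnerSO2 A
  have hminorant : ∀ s, 1 ≤ s → 2 - s ^ 2 + 2 * (s - 1) * maxInnerSO2 A - 2 * A.det ≤ 0 :=
    fun s hs => by
      have := h ▸ le_psiQC hΩo.measurableSet hΩb (hΩo.measure_pos volume hΩne).ne'
        (nullLagrangian_le_psi hR hs) A
      rwa [frobInner_smul_left, hRA, neg_mul, ← sub_eq_add_neg] at this
  have hr : 1 ≤ maxInnerSO2 A := by
    nlinarith [hminorant 1 le_rfl, maxInnerSO2_sq A, two_mul_det_le_frobInner_self A,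
      maxInnerSO2_nonneg A]
  have hdist : fnorm (A - R) ^ 2 ≤ 0 := by
    rw [fnorm_sub_sq hR, hRA]
    nlinarith [hminorant _ hr, maxInnerSO2_sq A]
  rwa [sub_eq_zero.1 (fnorm_eq_zero.1 (pow_eq_zero_iff two_ne_zero |>.1
    (le_antisymm hdist (sq_nonneg _))))]
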